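/- arXiv:2507.04148 — 3 statements merged into one kernel-verified Lean document; each statement's English description precedes it below -/
import Mathlib

section
/- Let z : ℝ → ℝ be weakly increasing, and define r(v) = C - v·z(v) - ∫_v^{v_max} z(σ) dσ for a constant C and all v ∈ [v_min, v_max]. Then for all v, v' ∈ [v_min, v_max]: r(v) + v·z(v) ≥ r(v') + v·z(v'). (Second-phase incentive compatibility.) -/
/-!
With the payment identity, the utility of a type-`v` bidder reporting `v'` is
`C - ∫_{v'}^{vmax} z + (v - v') z(v')`, so the gain from truthful reporting is
`∫_{v'}^{v} z - (v - v') z(v')`, which is nonnegative because `z` is monotone: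
on the interval between `v'` and `v` it lies above `z(v')` to the right of `v'`
and below it to the left.
-/

open Set intervalIntegral

theorem MonotoneOn.sub_mul_le_integral {z : ℝ → ℝ} {a b : ℝ} (hz : MonotoneOn z (uIcc a b)) :
    (b - a) * z a ≤ ∫ x in a..b, z x := by
  have hint := hz.intervalIntegrable (μ := MeasureTheory.volume)
  rcases le_total a b with hab | hba
  · rw [uIcc_of_le hab] at hz
    have hconst : ∫ _ in a..b, z a ≤ ∫ x in a..b, z x :=
      integral_mono_on hab intervalIntegrable_const hint fun x hx =>
        hz (left_mem_Icc.2 hab) hx hx.1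
    simpa [integral_const, smul_eq_mul] using hconst
  · rw [uIcc_of_ge hba] at hz
    have hconst : ∫ x in b..a, z x ≤ ∫ _ in b..a, z a :=
      integral_mono_on hba hint.symm intervalIntegrable_const fun x hx =>
        hz hx (right_mem_Icc.2 hba) hx.2
    rw [integral_symm]
    simp only [integral_const, smul_eq_mul] at hconst
    linarith

theorem stmt1_general (vmin vmax C : ℝ) (z : ℝ → ℝ)
    (hmono : MonotoneOn z (Set.Icc vmin vmax))
    (r : ℝ → ℝ)
    (hr : ∀ v ∈ Set.Icc vmin vmax, r v = C - v * z v - ∫ σ in v..vmax, z σ) :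
    ∀ v ∈ Set.Icc vmin vmax, ∀ v' ∈ Set.Icc vmin vmax,
      r v' + v * z v' ≤ r v + v * z v := by
  intro v hv v' hv'
  have hmax : vmax ∈ Icc vmin vmax := right_mem_Icc.2 (hv.1.trans hv.2)
  have hmono' : MonotoneOn z (uIcc v' v) := hmono.mono (uIcc_subset_Icc hv' hv)
  have hsplit := integral_add_adjacent_intervals
    (hmono'.intervalIntegrable (μ := MeasureTheory.volume))
    ((hmono.mono (uIcc_subset_Icc hv hmax)).intervalIntegrable (μ := MeasureTheory.volume))
  rw [hr v hv, hr v' hv']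
  linarith [hmono'.sub_mul_le_integral]

/-- Second-phase incentive compatibility follows from monotonicity of the allocation
via the continuous payment identity PI-r-cont. -/
theorem stmt1 (vmin vmax C : ℝ) (hV : vmin ≤ vmax) (z : ℝ → ℝ)
    (hmono : MonotoneOn z (Set.Icc vmin vmax))
    (hz : ∀ v ∈ Set.Icc vmin vmax, z v ∈ Set.Icc (0:ℝ) 1)
    (hint : IntervalIntegrable z MeasureTheory.volume vmin vmax)
    (r : ℝ → ℝ)
    (hr : ∀ v ∈ Set.Icc vmin vmax, r v = C - v * z v - ∫ σ in v..vmax, z σ) :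
    ∀ v ∈ Set.Icc vmin vmax, ∀ v' ∈ Set.Icc vmin vmax,
      r v' + v * z v' ≤ r v + v * z v :=
  stmt1_general vmin vmax C z hmono r hr
end

section
/- Conversely, if z : V → [0,1] on V = {v_1 < ... < v_n} is weakly increasing and r satisfies the discrete payment identity r(v_j) = r(v_1) + z(v_1)·v_1 − z(v_j)·v_j + Σ_{x=2}^{j} z(v_x)·(v_x − v_{x−1}), then all IC constraints r(v_j) + v_j·z(v_j) ≥ r(v_{j'}) + v_j·z(v_{j'}) hold. -/
/-!
Write `S j = ∑_{x=1}^{j} z x (v x - v (x-1))`, a Riemann–Stieltjes sum of `z` against `v`. The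
payment identity says that the truthful utility `r j + v j z j` is `S j` up to a constant, and
misreporting `j'` yields that constant plus `S j' + z j' (v j - v j')`. So IC amounts to
`z j' (v j - v j') ≤ S j - S j'`; as `S j - S j'` is the sum over `(j', j]`, this follows from
bounding that sum between `z` at the left and right endpoints times the total increment of `v`.
-/

open Finset

lemma sum_Ioc_sub_pred (v : ℕ → ℝ) {a b : ℕ} (hab : a ≤ b) :
    ∑ x ∈ Ioc a b, (v x - v (x - 1)) = v b - v a := by
  induction b, hab using Nat.le_induction with
  | base => simp
  | succ b hb ih => rw [sum_Ioc_succ_top hb, ih, Nat.add_sub_cancel]; ring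

section StieltjesSum

variable {v z : ℕ → ℝ} {a b : ℕ}

lemma sub_pred_nonneg_of_monotoneOn (hv : MonotoneOn v (Set.Icc a b)) {x : ℕ} (hx : x ∈ Ioc a b) :
    0 ≤ v x - v (x - 1) := by
  rw [mem_Ioc] at hx
  have hxb : x ∈ Set.Icc a b := ⟨hx.1.le, hx.2⟩
  have hpred : x - 1 ∈ Set.Icc a b := ⟨Nat.le_sub_one_of_lt hx.1, by omega⟩
  exact sub_nonneg.2 (hv hpred hxb (Nat.sub_le x 1))

lemma mul_sub_le_sum_Ioc (hv : MonotoneOn v (Set.Icc a b)) (hz : MonotoneOn z (Set.Icc a b))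
    (hab : a ≤ b) :
    z a * (v b - v a) ≤ ∑ x ∈ Ioc a b, z x * (v x - v (x - 1)) := by
  rw [← sum_Ioc_sub_pred v hab, mul_sum]
  refine sum_le_sum fun x hx => mul_le_mul_of_nonneg_right ?_ (sub_pred_nonneg_of_monotoneOn hv hx)
  rw [mem_Ioc] at hx
  exact hz (by simp [hab]) (by simp [hx.1.le, hx.2]) hx.1.le

lemma sum_Ioc_le_mul_sub (hv : MonotoneOn v (Set.Icc a b)) (hz : MonotoneOn z (Set.Icc a b))
    (hab : a ≤ b) :
    ∑ x ∈ Ioc a b, z x * (v x - v (x - 1)) ≤ z b * (v b - v a) := by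
  rw [← sum_Ioc_sub_pred v hab, mul_sum]
  refine sum_le_sum fun x hx => mul_le_mul_of_nonneg_right ?_ (sub_pred_nonneg_of_monotoneOn hv hx)
  rw [mem_Ioc] at hx
  exact hz (by simp [hx.1.le, hx.2]) (by simp [hab]) hx.2

end StieltjesSum

lemma sum_Icc_one_sub_sum_Icc_one (f : ℕ → ℝ) {a b : ℕ} (hab : a ≤ b) :
    ∑ x ∈ Icc 1 b, f x - ∑ x ∈ Icc 1 a, f x = ∑ x ∈ Ioc a b, f x := by
  have hIcc : ∀ m, Icc 1 m = Ioc 0 m := Icc_add_one_left_eq_Ioc 0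
  rw [hIcc, hIcc, ← sum_Ioc_consecutive f (Nat.zero_le a) hab, add_sub_cancel_left]

theorem stmt4_general (n : ℕ) (v z r : ℕ → ℝ)
    (hv : StrictMonoOn v (Set.Iio n))
    (hzmono : ∀ j' j, j' ≤ j → j < n → z j' ≤ z j)
    (hPI : ∀ j < n, r j = r 0 + z 0 * v 0 - z j * v j
      + ∑ x ∈ Finset.Icc 1 j, z x * (v x - v (x - 1))) :
    ∀ j < n, ∀ j' < n, r j' + v j * z j' ≤ r j + v j * z j := by
  intro j hj j' hj'
  have hmono : ∀ {a b : ℕ}, b < n → MonotoneOn v (Set.Icc a b) ∧ MonotoneOn z (Set.Icc a b) :=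
    fun hb => ⟨hv.monotoneOn.mono fun x hx => (Set.mem_Iio.2 (lt_of_le_of_lt hx.2 hb)),
      fun _ _ _ hy hxy => hzmono _ _ hxy (lt_of_le_of_lt hy.2 hb)⟩
  have hPIj := hPI j hj
  have hPIj' := hPI j' hj'
  rcases le_total j' j with h | h
  · have := mul_sub_le_sum_Ioc (hmono hj).1 (hmono hj).2 h
    rw [← sum_Icc_one_sub_sum_Icc_one _ h] at this
    linarith
  · have := sum_Ioc_le_mul_sub (hmono hj').1 (hmono hj').2 h
    rw [← sum_Icc_one_sub_sum_Icc_one _ h] at this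
    linarith

/-- Conversely, a weakly increasing allocation together with the discrete payment identity
implies all second-phase IC constraints. -/
theorem stmt4 (n : ℕ) (hn : 0 < n) (v z r : ℕ → ℝ)
    (hv : StrictMonoOn v (Set.Iio n))
    (hz : ∀ j < n, z j ∈ Set.Icc (0:ℝ) 1)
    (hzmono : ∀ j' j, j' ≤ j → j < n → z j' ≤ z j)
    (hPI : ∀ j < n, r j = r 0 + z 0 * v 0 - z j * v j
      + ∑ x ∈ Finset.Icc 1 j, z x * (v x - v (x - 1))) :
    ∀ j < n, ∀ j' < n, r j' + v j * z j' ≤ r j + v j * z j :=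
  stmt4_general n v z r hv hzmono hPI
end

section
/- Let T = {t_1 < ... < t_m} and Q(t,t') = E_{v∼G_t}[max(v, R(t'))] where R : T → ℝ is weakly decreasing and each G_t has finite support contained in V = {v_1 < ... < v_n}. If the value distributions satisfy FOSD ordering (G_{t}(v) ≤ G_{t'}(v) for t ≥ t'), then the function Q satisfies cyclic monotonicity on pairs: Q(t,t) + Q(t',t') ≥ Q(t,t') + Q(t',t) for all t, t' ∈ T. -/
/-!
Fix types `i ≤ i'`, so that `R i' ≤ R i`. The two-cycle gap is `∑ y, d y * (g i' y - g i y)` with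
`d y = max (v y) (R i) - max (v y) (R i')`: the gain from the larger refund shrinks as the value
grows, so `d` is antitone, while FOSD makes every partial sum of `g i' - g i` nonpositive, and the
full sum is zero. Abel summation turns these two facts into `∑ y, d y * (g i' y - g i y) ≤ 0`.
-/

open Finset

variable {K : Type*} [Field K] [LinearOrder K] [IsStrictOrderedRing K]

lemma antitone_max_sub_max {a b : K} (hba : b ≤ a) :
    Antitone fun x => max x a - max x b := by
  intro x x' hxx
  simp only [max_def]
  split_ifs <;> linarith

lemma sum_range_mul_nonpos_of_antitoneOn {n : ℕ} {d f : ℕ → K}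
    (hd : AntitoneOn d (Set.Iio n))
    (hpartial : ∀ j < n, ∑ y ∈ range (j + 1), f y ≤ 0)
    (htotal : ∑ y ∈ range n, f y = 0) :
    ∑ y ∈ range n, d y * f y ≤ 0 := by
  have hparts := sum_range_by_parts d f n
  simp only [smul_eq_mul] at hparts
  rw [hparts, htotal, mul_zero, zero_sub, neg_nonpos]
  refine sum_nonneg fun j hj => mul_nonneg_of_nonpos_of_nonpos ?_ (hpartial j ?_)
  · rw [mem_range] at hj
    exact sub_nonpos.2 (hd (Set.mem_Iio.2 (by omega)) (Set.mem_Iio.2 (by omega)) (Nat.le_succ j))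
  · rw [mem_range] at hj
    omega

lemma sum_mul_max_add_sum_mul_max_le {n : ℕ} {v p q : ℕ → K} {a b : K}
    (hv : MonotoneOn v (Set.Iio n)) (hba : b ≤ a)
    (hmass : ∑ y ∈ range n, p y = ∑ y ∈ range n, q y)
    (hfosd : ∀ j < n, ∑ y ∈ range (j + 1), q y ≤ ∑ y ∈ range (j + 1), p y) :
    (∑ y ∈ range n, p y * max (v y) b) + ∑ y ∈ range n, q y * max (v y) a ≤
      (∑ y ∈ range n, p y * max (v y) a) + ∑ y ∈ range n, q y * max (v y) b := by
  have hgap : ∑ y ∈ range n, (max (v y) a - max (v y) b) * (q y - p y) ≤ 0 :=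
    sum_range_mul_nonpos_of_antitoneOn ((antitone_max_sub_max hba).comp_monotoneOn hv)
      (fun j hj => by simpa only [sum_sub_distrib, sub_nonpos] using hfosd j hj)
      (by rw [sum_sub_distrib, hmass, sub_self])
  have hexpand : ∑ y ∈ range n, (max (v y) a - max (v y) b) * (q y - p y) =
      ((∑ y ∈ range n, p y * max (v y) b) + ∑ y ∈ range n, q y * max (v y) a) -
        ((∑ y ∈ range n, p y * max (v y) a) + ∑ y ∈ range n, q y * max (v y) b) := by
    simp only [← sum_add_distrib, ← sum_sub_distrib]
    exact sum_congr rfl fun y _ => by ring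
  linarith

theorem stmt12_general (m n : ℕ) (v : ℕ → ℝ) (g : ℕ → ℕ → ℝ) (R : ℕ → ℝ)
    (hv : StrictMonoOn v (Set.Iio n))
    (hg1 : ∀ i < m, ∑ j ∈ Finset.range n, g i j = 1)
    (hR : ∀ i i', i ≤ i' → i' < m → R i' ≤ R i)
    (hfosd : ∀ i i', i ≤ i' → i' < m → ∀ j < n,
      ∑ y ∈ Finset.range (j + 1), g i' y ≤ ∑ y ∈ Finset.range (j + 1), g i y) :
    ∀ i < m, ∀ i' < m,
      (∑ y ∈ Finset.range n, g i y * max (v y) (R i')) +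
        (∑ y ∈ Finset.range n, g i' y * max (v y) (R i)) ≤
      (∑ y ∈ Finset.range n, g i y * max (v y) (R i)) +
        (∑ y ∈ Finset.range n, g i' y * max (v y) (R i')) := by
  have hordered : ∀ i i', i ≤ i' → i' < m →
      (∑ y ∈ range n, g i y * max (v y) (R i')) + ∑ y ∈ range n, g i' y * max (v y) (R i) ≤
        (∑ y ∈ range n, g i y * max (v y) (R i)) + ∑ y ∈ range n, g i' y * max (v y) (R i') :=
    fun i i' hii hi' => sum_mul_max_add_sum_mul_max_le hv.monotoneOn (hR i i' hii hi')
      (by rw [hg1 i (hii.trans_lt hi'), hg1 i' hi']) (hfosd i i' hii hi')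
  intro i hi i' hi'
  rcases le_total i i' with hii | hi'i
  · exact hordered i i' hii hi'
  · linarith [hordered i' i hi'i hi]

/-- Two-cycle monotonicity of `Q(t,t') = E_{v∼G_t}[max(v, R(t'))]` in the discrete setting
with a weakly decreasing refund and FOSD-ordered value distributions. -/
theorem stmt12 (m n : ℕ) (v : ℕ → ℝ) (g : ℕ → ℕ → ℝ) (R : ℕ → ℝ)
    (hv : StrictMonoOn v (Set.Iio n))
    (hg0 : ∀ i < m, ∀ j < n, 0 ≤ g i j)
    (hg1 : ∀ i < m, ∑ j ∈ Finset.range n, g i j = 1)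
    (hR : ∀ i i', i ≤ i' → i' < m → R i' ≤ R i)
    (hfosd : ∀ i i', i ≤ i' → i' < m → ∀ j < n,
      ∑ y ∈ Finset.range (j + 1), g i' y ≤ ∑ y ∈ Finset.range (j + 1), g i y) :
    ∀ i < m, ∀ i' < m,
      (∑ y ∈ Finset.range n, g i y * max (v y) (R i')) +
        (∑ y ∈ Finset.range n, g i' y * max (v y) (R i)) ≤
      (∑ y ∈ Finset.range n, g i y * max (v y) (R i)) +
        (∑ y ∈ Finset.range n, g i' y * max (v y) (R i')) :=
  stmt12_general m n v g R hv hg1 hR hfosd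
end
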